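/- Assume the restricted eigenvalue condition, min_{j∈T} θ_j² ≥ 8βD log p/(nν²), βD ≥ 2L, 2/β ≤ 3D log p, and that events E_n and A_n hold. Then for every S ⊆ {1,…,p} with S ≠ T and |S \ T| ≤ 3s*, one has π(𝒢(S)) ≥ exp((D/2) log p)·π(S) ≥ π(S). -/

import Mathlib

open scoped BigOperators
open Finset

noncomputable section

/-- Span of the columns `X j`, `j ∈ S`. -/
def colSpan {n p : ℕ} (X : Fin p → EuclideanSpace ℝ (Fin n)) (S : Finset (Fin p)) :
    Submodule ℝ (EuclideanSpace ℝ (Fin n)) :=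
  Submodule.span ℝ (X '' ↑S)

/-- `Φ_S`, the orthogonal projection of ℝ^n onto the span of the columns in `S`. -/
noncomputable def proj {n p : ℕ} (X : Fin p → EuclideanSpace ℝ (Fin n)) (S : Finset (Fin p)) :
    EuclideanSpace ℝ (Fin n) →ₗ[ℝ] EuclideanSpace ℝ (Fin n) :=
  (colSpan X S).subtype ∘ₗ ((colSpan X S).orthogonalProjection).toLinearMap

/-- Restricted eigenvalue condition: `‖X_S w‖² ≥ n ν ‖w‖²` for all `S` with `|S| ≤ m`. -/
def RECond {n p : ℕ} (X : Fin p → EuclideanSpace ℝ (Fin n)) (ν : ℝ) (m : ℕ) : Prop :=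
  ∀ S : Finset (Fin p), S.card ≤ m → ∀ w : Fin p → ℝ,
    (n : ℝ) * ν * ∑ j ∈ S, w j ^ 2 ≤ ‖∑ j ∈ S, w j • X j‖ ^ 2

/-- The unnormalized weight exp(G(S,Y) − m(S)), where G(S,Y) = ‖Φ_S Y‖²/β and
m(S) = D|S| log p + (2/β) trace(Φ_S) + (4n/β) 1{|S| > 4s}. -/
noncomputable def postWt {n p : ℕ} (X : Fin p → EuclideanSpace ℝ (Fin n))
    (Y : EuclideanSpace ℝ (Fin n)) (β D : ℝ) (s : ℕ) (S : Finset (Fin p)) : ℝ :=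
  Real.exp (‖proj X S Y‖ ^ 2 / β -
    (D * S.card * Real.log p +
      2 * LinearMap.trace ℝ (EuclideanSpace ℝ (Fin n)) (proj X S) / β +
      if 4 * s < S.card then 4 * n / β else 0))

/-- The probability distribution π(S) ∝ exp(G(S,Y) − m(S)) on subsets of {1,…,p}. -/
noncomputable def postPi {n p : ℕ} (X : Fin p → EuclideanSpace ℝ (Fin n))
    (Y : EuclideanSpace ℝ (Fin n)) (β D : ℝ) (s : ℕ) (S : Finset (Fin p)) : ℝ :=
  postWt X Y β D s S / ∑ S' : Finset (Fin p), postWt X Y β D s S'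

/-!
For `S` with at most `3s*` spurious columns, `𝒢` changes `S` by a single column, and adding
the column `j` to `S` raises `‖Φ_S v‖²` by `⟪r_j, v⟫² / ‖r_j‖²`, where `r_j = (I - Φ_S) X_j`
(`projGain`). The restricted eigenvalue condition gives `‖r_j‖² ≥ nν`, so on `E_n` the noise
`ε` contributes at most `L log p ≤ (βD/2) log p` to such a gain.

If `T ⊆ S`, then `Xθ ∈ span X_S`, so removing a spurious column lowers `‖Φ_S Y‖²/β` by at most
`(D/2) log p` while the penalty drops by `D log p`. Otherwise the residual `(I - Φ_S) Xθ` has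
squared norm at least `nν ∑_{T∖S} θ_j²` (RE) and equal to `∑_{T∖S} θ_j ⟪r_j, Xθ⟫`;
Cauchy-Schwarz, the maximality of the chosen column and the beta-min condition give it a
signal gain of at least `8βD log p`. With the noise, `‖Φ_S Y‖²/β` then grows by at least
`(9/2) D log p`, against a penalty increase of at most `D log p + 2/β ≤ 4 D log p`.
-/

open scoped RealInnerProductSpace

namespace Submodule

variable {E : Type*} [NormedAddCommGroup E] [InnerProductSpace ℝ E]

theorem starProjection_sup_span_singleton (K : Submodule ℝ E) [K.HasOrthogonalProjection]
    (x : E) [(K ⊔ ℝ ∙ x).HasOrthogonalProjection] (v : E) :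
    (K ⊔ ℝ ∙ x).starProjection v =
      K.starProjection v + (ℝ ∙ (x - K.starProjection x)).starProjection v := by
  set q := x - K.starProjection x
  have hqK : (ℝ ∙ q) ≤ Kᗮ :=
    (span_singleton_le_iff_mem _ _).2 (K.sub_starProjection_mem_orthogonal x)
  have hq : (ℝ ∙ q) ≤ K ⊔ ℝ ∙ x := (span_singleton_le_iff_mem _ _).2 <|
    sub_mem (mem_sup_right (mem_span_singleton_self x))
      (mem_sup_left (K.starProjection_apply_mem x))
  apply eq_starProjection_of_mem_orthogonal
  · exact add_mem (mem_sup_left (K.starProjection_apply_mem v))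
      (hq ((ℝ ∙ q).starProjection_apply_mem v))
  · have hw : v - (K.starProjection v + (ℝ ∙ q).starProjection v) ∈ Kᗮ := by
      rw [sub_add_eq_sub_sub]
      exact sub_mem (K.sub_starProjection_mem_orthogonal v)
        (hqK ((ℝ ∙ q).starProjection_apply_mem v))
    rw [← inf_orthogonal, mem_inf, mem_orthogonal_singleton_iff_inner_right]
    refine ⟨hw, ?_⟩
    have hKx : ⟪K.starProjection x, v - (K.starProjection v + (ℝ ∙ q).starProjection v)⟫ = 0 :=
      hw _ (K.starProjection_apply_mem x)
    have hqv : ⟪q, v - (ℝ ∙ q).starProjection v⟫ = 0 :=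
      (ℝ ∙ q).sub_starProjection_mem_orthogonal v q (mem_span_singleton_self q)
    have hqKv : ⟪q, K.starProjection v⟫ = 0 :=
      inner_eq_zero_symm.1 (K.sub_starProjection_mem_orthogonal x _ (K.starProjection_apply_mem v))
    have hqw : ⟪q, v - (K.starProjection v + (ℝ ∙ q).starProjection v)⟫ = 0 := by
      rw [show v - (K.starProjection v + (ℝ ∙ q).starProjection v) =
        v - (ℝ ∙ q).starProjection v - K.starProjection v by abel, inner_sub_right, hqv, hqKv,
        sub_zero]
    calc ⟪x, v - (K.starProjection v + (ℝ ∙ q).starProjection v)⟫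
        = ⟪K.starProjection x + q, v - (K.starProjection v + (ℝ ∙ q).starProjection v)⟫ := by
          rw [add_sub_cancel]
      _ = 0 := by rw [inner_add_left, hKx, hqw, add_zero]

theorem norm_sq_starProjection_sup_span_singleton (K : Submodule ℝ E)
    [K.HasOrthogonalProjection] (x : E) [(K ⊔ ℝ ∙ x).HasOrthogonalProjection] (v : E) :
    ‖(K ⊔ ℝ ∙ x).starProjection v‖ ^ 2 = ‖K.starProjection v‖ ^ 2 +
      (⟪x - K.starProjection x, v⟫ / ‖x - K.starProjection x‖) ^ 2 := by
  have horth : ⟪K.starProjection v, (ℝ ∙ (x - K.starProjection x)).starProjection v⟫ = 0 :=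
    (span_singleton_le_iff_mem _ _).2 (K.sub_starProjection_mem_orthogonal x)
      (starProjection_apply_mem _ v) _ (K.starProjection_apply_mem v)
  rw [starProjection_sup_span_singleton, norm_add_sq_real, horth, mul_zero, add_zero,
    starProjection_singleton, norm_smul, Real.norm_eq_abs, mul_pow, sq_abs,
    RCLike.ofReal_real_eq_id, id]
  generalize x - K.starProjection x = q
  rcases eq_or_ne q 0 with hq | hq
  · simp [hq]
  · have : ‖q‖ ≠ 0 := norm_ne_zero_iff.2 hq
    field_simp

theorem norm_sub_starProjection_le (K : Submodule ℝ E) [K.HasOrthogonalProjection] (v : E) :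
    ‖v - K.starProjection v‖ ≤ ‖v‖ := by
  rw [← starProjection_orthogonal_val]
  exact Kᗮ.norm_starProjection_apply_le v

end Submodule

theorem sq_mul_le_of_mul_sum_sq_le_sum_mul {ι : Type*} {t : Finset ι} (ht : t.Nonempty)
    {θ u : ι → ℝ} {C m b : ℝ} (hC : 0 ≤ C) (hm : ∀ j ∈ t, m ≤ θ j ^ 2)
    (hu : ∀ j ∈ t, u j ^ 2 ≤ b) (h : C * ∑ j ∈ t, θ j ^ 2 ≤ ∑ j ∈ t, θ j * u j) :
    C ^ 2 * m ≤ b := by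
  obtain ⟨j₀, hj₀⟩ := ht
  have hb : 0 ≤ b := (sq_nonneg _).trans (hu j₀ hj₀)
  have hk : (0 : ℝ) < t.card := by exact_mod_cast card_pos.2 ⟨j₀, hj₀⟩
  have hK : t.card * m ≤ ∑ j ∈ t, θ j ^ 2 := by
    simpa [nsmul_eq_mul] using card_nsmul_le_sum t _ m hm
  have hU : ∑ j ∈ t, u j ^ 2 ≤ t.card * b := by
    simpa [nsmul_eq_mul] using sum_le_card_nsmul t _ b hu
  have hK0 : 0 ≤ ∑ j ∈ t, θ j ^ 2 := sum_nonneg fun j _ => sq_nonneg (θ j)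
  have hsq : (C * ∑ j ∈ t, θ j ^ 2) ^ 2 ≤ (∑ j ∈ t, θ j ^ 2) * (t.card * b) :=
    calc (C * ∑ j ∈ t, θ j ^ 2) ^ 2 ≤ (∑ j ∈ t, θ j * u j) ^ 2 :=
          pow_le_pow_left₀ (by positivity) h 2
      _ ≤ (∑ j ∈ t, θ j ^ 2) * ∑ j ∈ t, u j ^ 2 := sum_mul_sq_le_sq_mul_sq t θ u
      _ ≤ (∑ j ∈ t, θ j ^ 2) * (t.card * b) := mul_le_mul_of_nonneg_left hU hK0
  rcases hK0.eq_or_lt with hzero | hpos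
  · have hm0 : m ≤ 0 := by nlinarith
    nlinarith [sq_nonneg C]
  · have hCK : C ^ 2 * ∑ j ∈ t, θ j ^ 2 ≤ t.card * b := by nlinarith
    have : t.card * (C ^ 2 * m) ≤ t.card * b := by nlinarith [sq_nonneg C]
    exact le_of_mul_le_mul_left this hk

section Columns

variable {n p : ℕ} {X : Fin p → EuclideanSpace ℝ (Fin n)}

theorem proj_apply (S : Finset (Fin p)) (v : EuclideanSpace ℝ (Fin n)) :
    proj X S v = (colSpan X S).starProjection v := rfl

theorem mem_colSpan {S : Finset (Fin p)} {j : Fin p} (hj : j ∈ S) : X j ∈ colSpan X S :=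
  Submodule.subset_span ⟨j, hj, rfl⟩

theorem sum_smul_mem_colSpan {S T : Finset (Fin p)} (hTS : T ⊆ S) {θ : Fin p → ℝ}
    (hθ : ∀ j ∉ T, θ j = 0) : ∑ j, θ j • X j ∈ colSpan X S := by
  refine Submodule.sum_mem _ fun j _ => ?_
  by_cases hj : j ∈ T
  · exact Submodule.smul_mem _ _ (mem_colSpan (hTS hj))
  · rw [hθ j hj, zero_smul]
    exact Submodule.zero_mem _

theorem colSpan_insert (i : Fin p) (S : Finset (Fin p)) :
    colSpan X (insert i S) = colSpan X S ⊔ ℝ ∙ X i := by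
  rw [colSpan, colSpan, coe_insert, Set.image_insert_eq, Submodule.span_insert, sup_comm]

theorem exists_sum_eq_of_mem_colSpan {S : Finset (Fin p)} {v : EuclideanSpace ℝ (Fin n)}
    (hv : v ∈ colSpan X S) : ∃ w : Fin p → ℝ, (∀ j ∉ S, w j = 0) ∧ ∑ j ∈ S, w j • X j = v := by
  obtain ⟨l, hl, rfl⟩ := (Finsupp.mem_span_image_iff_linearCombination ℝ).1 hv
  have hsupp : l.support ⊆ S := fun j hj => by exact_mod_cast hl hj
  refine ⟨l, fun j hj => Finsupp.notMem_support_iff.1 fun h => hj (hsupp h), ?_⟩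
  rw [Finsupp.linearCombination_apply, Finsupp.sum]
  exact (sum_subset hsupp fun j _ hj => by rw [Finsupp.notMem_support_iff.1 hj, zero_smul]).symm

variable (X) in
def projGain (S : Finset (Fin p)) (j : Fin p) (v : EuclideanSpace ℝ (Fin n)) : ℝ :=
  (⟪X j - proj X S (X j), v⟫ / ‖X j - proj X S (X j)‖) ^ 2

theorem norm_sq_proj_insert (S : Finset (Fin p)) (j : Fin p) (v : EuclideanSpace ℝ (Fin n)) :
    ‖proj X (insert j S) v‖ ^ 2 = ‖proj X S v‖ ^ 2 + projGain X S j v := by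
  rw [proj_apply, colSpan_insert]
  exact Submodule.norm_sq_starProjection_sup_span_singleton _ _ _

theorem projGain_add_of_mem {S : Finset (Fin p)} {j : Fin p} {u : EuclideanSpace ℝ (Fin n)}
    (hu : u ∈ colSpan X S) (w : EuclideanSpace ℝ (Fin n)) :
    projGain X S j (u + w) = projGain X S j w := by
  rw [projGain, projGain, inner_add_right, proj_apply,
    Submodule.starProjection_inner_eq_zero _ _ hu, zero_add]

theorem le_projGain_add {S : Finset (Fin p)} {j : Fin p} {u w : EuclideanSpace ℝ (Fin n)}
    {c : ℝ} (hu : 8 * c ≤ projGain X S j u) (hw : projGain X S j w ≤ c / 2) :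
    9 / 2 * c ≤ projGain X S j (u + w) := by
  rw [projGain] at hu hw
  rw [projGain, inner_add_right, add_div]
  generalize ⟪X j - proj X S (X j), u⟫ / ‖X j - proj X S (X j)‖ = a at hu ⊢
  generalize ⟪X j - proj X S (X j), w⟫ / ‖X j - proj X S (X j)‖ = b at hw ⊢
  nlinarith [sq_nonneg (a + 4 * b)]

theorem inner_sq_le_projGain_mul (S : Finset (Fin p)) (j : Fin p) (v : EuclideanSpace ℝ (Fin n)) :
    ⟪X j - proj X S (X j), v⟫ ^ 2 ≤ projGain X S j v * ‖X j‖ ^ 2 := by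
  have hle : ‖X j - proj X S (X j)‖ ≤ ‖X j‖ := Submodule.norm_sub_starProjection_le _ _
  have heq : ⟪X j - proj X S (X j), v⟫ ^ 2 = projGain X S j v * ‖X j - proj X S (X j)‖ ^ 2 := by
    rw [projGain]
    rcases eq_or_ne (X j - proj X S (X j)) 0 with h | h
    · simp [h]
    · have : ‖X j - proj X S (X j)‖ ≠ 0 := norm_ne_zero_iff.2 h
      field_simp
  rw [heq]
  gcongr
  exact sq_nonneg _

theorem norm_sq_sub_proj_eq_sum (S : Finset (Fin p)) {T : Finset (Fin p)} {θ : Fin p → ℝ}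
    (hθ : ∀ j ∉ T, θ j = 0) :
    ‖(∑ j, θ j • X j) - proj X S (∑ j, θ j • X j)‖ ^ 2 =
      ∑ j ∈ T \ S, θ j * ⟪X j - proj X S (X j), ∑ k, θ k • X k⟫ := by
  set v := ∑ k, θ k • X k
  have hself : ∀ j, ⟪X j - proj X S (X j), v⟫ = ⟪X j, v - proj X S v⟫ := fun j => by
    rw [inner_sub_left, inner_sub_right, proj_apply, proj_apply,
      Submodule.inner_starProjection_left_eq_right]
  have hPv : ⟪proj X S v, v - proj X S v⟫ = 0 := by
    rw [proj_apply, real_inner_comm]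
    exact Submodule.starProjection_inner_eq_zero _ _ (Submodule.starProjection_apply_mem _ _)
  calc ‖v - proj X S v‖ ^ 2 = ⟪v, v - proj X S v⟫ := by
        rw [← real_inner_self_eq_norm_sq, inner_sub_left, hPv, sub_zero]
    _ = ∑ j, θ j * ⟪X j, v - proj X S v⟫ := by
        simp only [v, sum_inner, real_inner_smul_left]
    _ = ∑ j ∈ T \ S, θ j * ⟪X j - proj X S (X j), v⟫ := by
        simp only [hself]
        refine (sum_subset (subset_univ _) fun j _ hj => ?_).symm
        rcases (not_and_or.1 (mt mem_sdiff.2 hj)) with hjT | hjS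
        · rw [hθ j hjT, zero_mul]
        · rw [real_inner_comm, proj_apply,
            Submodule.starProjection_inner_eq_zero _ _ (mem_colSpan (not_not.1 hjS)), mul_zero]

theorem RECond.mul_sum_sq_le_norm_sq_sub_proj {m : ℕ} {ν : ℝ} (hRE : RECond X ν m) (hν : 0 ≤ ν)
    {S B : Finset (Fin p)} (hcard : (B ∪ S).card ≤ m) {θ : Fin p → ℝ}
    (hθ : ∀ j ∉ B, θ j = 0) :
    n * ν * ∑ j ∈ B \ S, θ j ^ 2 ≤
      ‖(∑ j, θ j • X j) - proj X S (∑ j, θ j • X j)‖ ^ 2 := by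
  obtain ⟨w, hw0, hw⟩ := exists_sum_eq_of_mem_colSpan (proj_apply S _ ▸
    (colSpan X S).starProjection_apply_mem (∑ j, θ j • X j))
  have hv : ∑ j, θ j • X j = ∑ j ∈ B ∪ S, θ j • X j :=
    (sum_subset (subset_univ _) fun j _ hj => by
      rw [hθ j fun hB => hj (mem_union_left _ hB), zero_smul]).symm
  have hPv : proj X S (∑ j, θ j • X j) = ∑ j ∈ B ∪ S, w j • X j := by
    rw [proj_apply, ← hw]
    exact sum_subset subset_union_right fun j _ hj => by rw [hw0 j hj, zero_smul]
  have hres : (∑ j, θ j • X j) - proj X S (∑ j, θ j • X j) =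
      ∑ j ∈ B ∪ S, (θ j - w j) • X j := by
    rw [hPv, hv, ← sum_sub_distrib]
    simp only [sub_smul]
  rw [hres]
  refine le_trans ?_ (hRE _ hcard _)
  refine mul_le_mul_of_nonneg_left ?_ (by positivity)
  calc ∑ j ∈ B \ S, θ j ^ 2 = ∑ j ∈ B \ S, (θ j - w j) ^ 2 :=
        sum_congr rfl fun j hj => by rw [hw0 j (mem_sdiff.1 hj).2, sub_zero]
    _ ≤ ∑ j ∈ B ∪ S, (θ j - w j) ^ 2 :=
        sum_le_sum_of_subset_of_nonneg (sdiff_subset.trans subset_union_left)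
          fun _ _ _ => sq_nonneg _

theorem RECond.mul_le_norm_sq_sub_proj {m : ℕ} {ν : ℝ} (hRE : RECond X ν m) (hν : 0 ≤ ν)
    {S : Finset (Fin p)} {i : Fin p} (hi : i ∉ S) (hcard : (insert i S).card ≤ m) :
    n * ν ≤ ‖X i - proj X S (X i)‖ ^ 2 := by
  have h := hRE.mul_sum_sq_le_norm_sq_sub_proj hν (B := {i}) (S := S)
    (by rwa [← insert_eq]) (θ := Pi.single i 1) fun j hj => by simp_all
  simpa [sdiff_eq_self_of_disjoint (disjoint_singleton_left.2 hi), Pi.single_apply] using h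

theorem RECond.projGain_le_of_inner_sq_le {m : ℕ} {ν : ℝ} (hRE : RECond X ν m) (hn : 0 < n)
    (hν : 0 < ν) {S : Finset (Fin p)} {i : Fin p} (hi : i ∉ S) (hcard : (insert i S).card ≤ m)
    {v : EuclideanSpace ℝ (Fin n)} {B : ℝ}
    (h : ⟪X i - proj X S (X i), v⟫ ^ 2 ≤ n * ν * B) : projGain X S i v ≤ B := by
  have hnν : (0 : ℝ) < n * ν := by positivity
  have hq := hRE.mul_le_norm_sq_sub_proj hν.le hi hcard
  have hB : 0 ≤ B := nonneg_of_mul_nonneg_right ((sq_nonneg _).trans h) hnν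
  rw [projGain, div_pow, div_le_iff₀ (hnν.trans_le hq)]
  calc _ ≤ n * ν * B := h
    _ ≤ ‖X i - proj X S (X i)‖ ^ 2 * B := by gcongr
    _ = B * ‖X i - proj X S (X i)‖ ^ 2 := mul_comm _ _

theorem RECond.mul_le_projGain {m : ℕ} {ν : ℝ} (hRE : RECond X ν m) (hn : 0 < n) (hν : 0 ≤ ν)
    (hX : ∀ j, ‖X j‖ = √n) {S T : Finset (Fin p)} (hcard : (T ∪ S).card ≤ m)
    {θ : Fin p → ℝ} (hθ : ∀ j ∉ T, θ j = 0) {μ : ℝ} (hμ : ∀ j ∈ T \ S, μ ≤ θ j ^ 2)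
    {i : Fin p} (hi : i ∈ T \ S)
    (hmax : ∀ j ∈ T \ S, ‖proj X (insert j S) (∑ k, θ k • X k)‖ ≤
      ‖proj X (insert i S) (∑ k, θ k • X k)‖) :
    n * ν ^ 2 * μ ≤ projGain X S i (∑ k, θ k • X k) := by
  have hu : ∀ j ∈ T \ S, ⟪X j - proj X S (X j), ∑ k, θ k • X k⟫ ^ 2 ≤
      n * projGain X S i (∑ k, θ k • X k) := fun j hj => by
    have hgain : projGain X S j (∑ k, θ k • X k) ≤ projGain X S i (∑ k, θ k • X k) := by
      have := pow_le_pow_left₀ (norm_nonneg _) (hmax j hj) 2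
      rw [norm_sq_proj_insert, norm_sq_proj_insert] at this
      linarith
    calc _ ≤ projGain X S j (∑ k, θ k • X k) * ‖X j‖ ^ 2 := inner_sq_le_projGain_mul S j _
      _ ≤ projGain X S i (∑ k, θ k • X k) * n := by
          rw [hX, Real.sq_sqrt (Nat.cast_nonneg n)]
          gcongr
      _ = _ := mul_comm _ _
  have h := sq_mul_le_of_mul_sum_sq_le_sum_mul ⟨i, hi⟩ (C := n * ν) (by positivity) hμ hu
    (norm_sq_sub_proj_eq_sum S hθ ▸ hRE.mul_sum_sq_le_norm_sq_sub_proj hν hcard hθ)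
  have hn' : (0 : ℝ) < n := by exact_mod_cast hn
  exact le_of_mul_le_mul_left (by linarith) hn'

end Columns

section Posterior

variable {n p : ℕ} {X : Fin p → EuclideanSpace ℝ (Fin n)}

theorem isProj_proj (S : Finset (Fin p)) : LinearMap.IsProj (colSpan X S) (proj X S) :=
  ⟨fun _ => Submodule.starProjection_apply_mem _ _,
    fun _ hv => Submodule.starProjection_eq_self_iff.2 hv⟩

theorem trace_proj_le_trace_proj_insert (S : Finset (Fin p)) (i : Fin p) :
    LinearMap.trace ℝ _ (proj X S) ≤ LinearMap.trace ℝ _ (proj X (insert i S)) := by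
  rw [(isProj_proj S).trace, (isProj_proj _).trace]
  exact_mod_cast Submodule.finrank_mono (Submodule.span_mono (Set.image_mono (by simp)))

theorem trace_proj_insert_le (S : Finset (Fin p)) (i : Fin p) :
    LinearMap.trace ℝ _ (proj X (insert i S)) ≤ LinearMap.trace ℝ _ (proj X S) + 1 := by
  rw [(isProj_proj S).trace, (isProj_proj _).trace, colSpan_insert]
  have h1 : Module.finrank ℝ (ℝ ∙ X i) ≤ 1 := (finrank_span_le_card _).trans (by simp)
  exact_mod_cast (Submodule.finrank_add_le_finrank_add_finrank _ _).trans (by omega)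

variable (X) in
def logPostWt (Y : EuclideanSpace ℝ (Fin n)) (β D : ℝ) (s : ℕ) (S : Finset (Fin p)) : ℝ :=
  ‖proj X S Y‖ ^ 2 / β -
    (D * S.card * Real.log p +
      2 * LinearMap.trace ℝ (EuclideanSpace ℝ (Fin n)) (proj X S) / β +
      if 4 * s < S.card then 4 * n / β else 0)

variable {Y : EuclideanSpace ℝ (Fin n)} {β D : ℝ} {s : ℕ}

theorem postPi_nonneg (S : Finset (Fin p)) : 0 ≤ postPi X Y β D s S :=
  div_nonneg (Real.exp_pos _).le (sum_nonneg fun _ _ => (Real.exp_pos _).le)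

theorem exp_mul_postPi_le_postPi {S S' : Finset (Fin p)} {a : ℝ}
    (h : logPostWt X Y β D s S + a ≤ logPostWt X Y β D s S') :
    Real.exp a * postPi X Y β D s S ≤ postPi X Y β D s S' := by
  have hZ : 0 < ∑ S'', postWt X Y β D s S'' :=
    sum_pos (fun _ _ => Real.exp_pos _) univ_nonempty
  rw [postPi, postPi, ← mul_div_assoc, div_le_div_iff_of_pos_right hZ, postWt, postWt,
    ← Real.exp_add, Real.exp_le_exp]
  exact (add_comm _ _).trans_le h

theorem logPostWt_insert {S : Finset (Fin p)} {i : Fin p} (hi : i ∉ S)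
    (hcard : (insert i S).card ≤ 4 * s) :
    logPostWt X Y β D s (insert i S) = logPostWt X Y β D s S + projGain X S i Y / β -
      D * Real.log p - 2 * (LinearMap.trace ℝ _ (proj X (insert i S)) -
        LinearMap.trace ℝ _ (proj X S)) / β := by
  rw [card_insert_of_notMem hi] at hcard
  rw [logPostWt, logPostWt, norm_sq_proj_insert, card_insert_of_notMem hi,
    if_neg (by omega), if_neg (by omega)]
  push_cast
  ring

theorem logPostWt_add_le_erase {S : Finset (Fin p)} {i : Fin p} (hβ : 0 < β) (hi : i ∈ S)
    (hcard : S.card ≤ 4 * s) (hgain : projGain X (S.erase i) i Y ≤ β * D * Real.log p / 2) :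
    logPostWt X Y β D s S + D / 2 * Real.log p ≤ logPostWt X Y β D s (S.erase i) := by
  have hgain' : projGain X (S.erase i) i Y / β ≤ D / 2 * Real.log p := by
    rw [div_le_iff₀ hβ]; linarith
  have htrace := trace_proj_le_trace_proj_insert (X := X) (S.erase i) i
  rw [insert_erase hi] at htrace
  have htrace' : 0 ≤ 2 * (LinearMap.trace ℝ _ (proj X S) -
      LinearMap.trace ℝ _ (proj X (S.erase i))) / β := div_nonneg (by linarith) hβ.le
  have h := logPostWt_insert (X := X) (Y := Y) (β := β) (D := D) (notMem_erase i S)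
    (by rwa [insert_erase hi])
  rw [insert_erase hi] at h
  linarith

theorem logPostWt_add_le_insert {S : Finset (Fin p)} {i : Fin p} (hβ : 0 < β) (hi : i ∉ S)
    (hcard : (insert i S).card ≤ 4 * s)
    (hgain : 9 / 2 * (β * D * Real.log p) ≤ projGain X S i Y)
    (hβD : 2 / β ≤ 3 * D * Real.log p) :
    logPostWt X Y β D s S + D / 2 * Real.log p ≤ logPostWt X Y β D s (insert i S) := by
  have hgain' : 9 / 2 * D * Real.log p ≤ projGain X S i Y / β := by
    rw [le_div_iff₀ hβ]; linarith
  have htrace := trace_proj_insert_le (X := X) S i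
  have htrace' : 2 * (LinearMap.trace ℝ _ (proj X (insert i S)) -
      LinearMap.trace ℝ _ (proj X S)) / β ≤ 2 / β :=
    div_le_div_of_nonneg_right (by linarith) hβ.le
  rw [logPostWt_insert hi hcard]
  linarith

end Posterior

theorem stmt10_general {n p s : ℕ} (hn : 0 < n) (hp : 2 ≤ p)
    (X : Fin p → EuclideanSpace ℝ (Fin n))
    (hX : ∀ j, ‖X j‖ = Real.sqrt n)
    {ν : ℝ} (hν : 0 < ν) (hRE : RECond X ν (6 * s))
    (θ : Fin p → ℝ) (T : Finset (Fin p)) (hT : T = Finset.univ.filter fun j => θ j ≠ 0)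
    (hTcard : T.card = s)
    (ε Y : EuclideanSpace ℝ (Fin n)) (hY : Y = (∑ j, θ j • X j) + ε)
    (β D L : ℝ) (hβ : 0 < β) (hD : 0 < D)
    (hmin : ∀ j ∈ T, 8 * β * D * Real.log p / ((n : ℝ) * ν ^ 2) ≤ θ j ^ 2)
    (hβD : 2 * L ≤ β * D) (hβD' : 2 / β ≤ 3 * D * Real.log p)
    (hE : ∀ S : Finset (Fin p), S.card < 6 * s → ∀ j ∉ S,
      (inner ℝ (X j - proj X S (X j)) ε : ℝ) ^ 2 ≤ (n : ℝ) * L * ν * Real.log p)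
    (Gmap : Finset (Fin p) → Finset (Fin p))
    (hG1 : ∀ S, S ≠ T → (S \ T).card ≤ 3 * s → T ⊆ S →
      ∃ i ∈ S \ T, Gmap S = S.erase i)
    (hG2 : ∀ S, (S \ T).card ≤ 3 * s → ¬ T ⊆ S →
      ∃ i ∈ T \ S, Gmap S = insert i S ∧ ∀ j ∈ T \ S,
        ‖proj X (insert j S) (∑ k, θ k • X k)‖ ≤ ‖proj X (insert i S) (∑ k, θ k • X k)‖) :
    ∀ S : Finset (Fin p), S ≠ T → (S \ T).card ≤ 3 * s →
      Real.exp ((D / 2) * Real.log p) * postPi X Y β D s S ≤ postPi X Y β D s (Gmap S) ∧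
      postPi X Y β D s S ≤ Real.exp ((D / 2) * Real.log p) * postPi X Y β D s S := by
  intro S hST hS3
  have hlog : 0 < Real.log p := Real.log_pos (by exact_mod_cast hp)
  have hθ : ∀ j ∉ T, θ j = 0 := fun j hj => by simpa [hT] using hj
  have hS : S.card ≤ 4 * s := (card_le_card_sdiff_add_card (t := T)).trans (by omega)
  have hnoise : ∀ S' i, i ∉ S' → (insert i S').card ≤ 4 * s →
      projGain X S' i ε ≤ β * D * Real.log p / 2 := fun S' i hi hcard => by
    have hE' := hE S' (by rw [card_insert_of_notMem hi] at hcard; omega) i hi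
    refine (hRE.projGain_le_of_inner_sq_le hn hν hi (by omega)
      (B := L * Real.log p) (hE'.trans_eq (by ring))).trans ?_
    linarith [mul_le_mul_of_nonneg_right hβD hlog.le]
  suffices key : logPostWt X Y β D s S + D / 2 * Real.log p ≤ logPostWt X Y β D s (Gmap S) from
    ⟨exp_mul_postPi_le_postPi key,
      le_mul_of_one_le_left (postPi_nonneg S) (Real.one_le_exp (by positivity))⟩
  by_cases hTS : T ⊆ S
  · obtain ⟨i, hi, hG⟩ := hG1 S hST hS3 hTS
    obtain ⟨hiS, hiT⟩ := mem_sdiff.1 hi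
    have hTS' : T ⊆ S.erase i := fun j hj => mem_erase.2 ⟨fun h => hiT (h ▸ hj), hTS hj⟩
    rw [hG]
    refine logPostWt_add_le_erase hβ hiS hS ?_
    rw [hY, projGain_add_of_mem (sum_smul_mem_colSpan hTS' hθ)]
    exact hnoise _ _ (notMem_erase i S) (by rwa [insert_erase hiS])
  · obtain ⟨i, hi, hG, hmax⟩ := hG2 S hS3 hTS
    obtain ⟨hiT, hiS⟩ := mem_sdiff.1 hi
    have hcard : (insert i S).card ≤ 4 * s :=
      (card_le_card_sdiff_add_card (t := T)).trans (by rw [insert_sdiff_of_mem S hiT]; omega)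
    have hsignal := hRE.mul_le_projGain hn hν.le hX ((card_union_le T S).trans (by omega)) hθ
      (fun j hj => hmin j (mem_sdiff.1 hj).1) hi hmax
    rw [hG]
    refine logPostWt_add_le_insert hβ hiS hcard ?_ hβD'
    rw [hY]
    refine le_projGain_add (hsignal.trans_eq' ?_) (hnoise S i hiS hcard)
    field_simp

/-- under the RE condition, the beta-min condition, βD ≥ 2L, 2/β ≤ 3D log p and
events E_n and A_n, for every S ≠ T with |S \ T| ≤ 3s*:
π(𝒢(S)) ≥ exp((D/2) log p)·π(S) ≥ π(S). -/
theorem stmt10 {n p s : ℕ} (hn : 0 < n) (hp : 2 ≤ p) (hs : 0 < s) (hsp : 6 * s ≤ p)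
    (X : Fin p → EuclideanSpace ℝ (Fin n))
    (hX : ∀ j, ‖X j‖ = Real.sqrt n)
    {ν : ℝ} (hν : 0 < ν) (hRE : RECond X ν (6 * s))
    (θ : Fin p → ℝ) (T : Finset (Fin p)) (hT : T = Finset.univ.filter fun j => θ j ≠ 0)
    (hTcard : T.card = s)
    (ε Y : EuclideanSpace ℝ (Fin n)) (hY : Y = (∑ j, θ j • X j) + ε)
    (β D c L : ℝ) (hβ : 0 < β) (hD : 0 < D) (hc : 0 < c) (hL : 0 < L)
    (hmin : ∀ j ∈ T, 8 * β * D * Real.log p / ((n : ℝ) * ν ^ 2) ≤ θ j ^ 2)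
    (hβD : 2 * L ≤ β * D) (hβD' : 2 / β ≤ 3 * D * Real.log p)
    (hE : ∀ S : Finset (Fin p), S.card < 6 * s → ∀ j ∉ S,
      (inner ℝ (X j - proj X S (X j)) ε : ℝ) ^ 2 ≤ (n : ℝ) * L * ν * Real.log p)
    (That : Finset (Fin p)) (hThatcard : That.card ≤ 2 * s)
    (hThatrisk : ‖(∑ j, θ j • X j) - proj X That (∑ j, θ j • X j)‖ ^ 2 ≤
      c * s * Real.log p)
    (Gmap : Finset (Fin p) → Finset (Fin p))
    (hG1 : ∀ S, S ≠ T → (S \ T).card ≤ 3 * s → T ⊆ S →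
      ∃ i ∈ S \ T, Gmap S = S.erase i)
    (hG2 : ∀ S, (S \ T).card ≤ 3 * s → ¬ T ⊆ S →
      ∃ i ∈ T \ S, Gmap S = insert i S ∧ ∀ j ∈ T \ S,
        ‖proj X (insert j S) (∑ k, θ k • X k)‖ ≤ ‖proj X (insert i S) (∑ k, θ k • X k)‖)
    (hG3 : ∀ S, 3 * s < (S \ T).card → Gmap S = That) :
    ∀ S : Finset (Fin p), S ≠ T → (S \ T).card ≤ 3 * s →
      Real.exp ((D / 2) * Real.log p) * postPi X Y β D s S ≤ postPi X Y β D s (Gmap S) ∧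
      postPi X Y β D s S ≤ Real.exp ((D / 2) * Real.log p) * postPi X Y β D s S :=
  stmt10_general hn hp X hX hν hRE θ T hT hTcard ε Y hY β D L hβ hD hmin hβD hβD' hE Gmap hG1 hG2

end
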